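/- Let χ : ℝ × ℝ → ℝ be continuously differentiable with ∂χ/∂q₁(s, 0) = 0 and ∂χ/∂p₁(s, 0) = 1 for all s ∈ ℝ, let A : ℝ → ℝ be continuously differentiable, let F be a real inner product space, and let q̄₀, p̄₀ ∈ F with r₀² = ‖q̄₀‖² + ‖p̄₀‖². Then there exist differentiable functions q₁, p₁ : ℝ → ℝ and q̄, p̄ : ℝ → F satisfying for all t the Hamiltonian system q₁' = (∂χ/∂p₁)(q₁,p₁)·A(‖q̄‖²+‖p̄‖²), p₁' = −(∂χ/∂q₁)(q₁,p₁)·A(‖q̄‖²+‖p̄‖²), q̄' = 2χ(q₁,p₁)·A'(‖q̄‖²+‖p̄‖²)·p̄, p̄' = −2χ(q₁,p₁)·A'(‖q̄‖²+‖p̄‖²)·q̄, with initial conditions q₁(0) = p₁(0) = 0, q̄(0) = q̄₀, p̄(0) = p̄₀, and such that for all t: p₁(t) = 0, q₁(t) = t·A(r₀²), and ‖q̄(t)‖² + ‖p̄(t)‖² = r₀². -/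

import Mathlib

/-!
Along the line `q₁ = t·A(r₀²)`, `p₁ = 0` the hypotheses on `χ` make the `(q₁, p₁)`-equations
hold as soon as `‖q̄‖² + ‖p̄‖²` stays equal to `r₀²`. The `(q̄, p̄)`-equations are then a rotation
`q̄' = ω p̄`, `p̄' = -ω q̄` with the prescribed angular speed `ω(t) = 2 χ(t·A(r₀²), 0) A'(r₀²)`;
it is solved by rotating `(q̄₀, p̄₀)` by the angle `θ(t) = ∫₀ᵗ ω`, which preserves
`‖q̄‖² + ‖p̄‖²`.
-/

open Real

section Rotation

variable {F : Type*} [NormedAddCommGroup F] [InnerProductSpace ℝ F]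

theorem norm_sq_add_norm_sq_rotate (θ : ℝ) (x y : F) :
    ‖cos θ • x + sin θ • y‖ ^ 2 + ‖(-sin θ) • x + cos θ • y‖ ^ 2 = ‖x‖ ^ 2 + ‖y‖ ^ 2 := by
  rw [norm_add_sq_real, norm_add_sq_real]
  simp only [norm_smul, real_inner_smul_left, real_inner_smul_right, Real.norm_eq_abs,
    mul_pow, sq_abs]
  linear_combination (‖x‖ ^ 2 + ‖y‖ ^ 2) * sin_sq_add_cos_sq θ

theorem HasDerivAt.rotate_fst {θ : ℝ → ℝ} {ω t : ℝ} (hθ : HasDerivAt θ ω t) (x y : F) :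
    HasDerivAt (fun t => Real.cos (θ t) • x + Real.sin (θ t) • y)
      (ω • ((-Real.sin (θ t)) • x + Real.cos (θ t) • y)) t :=
  ((hθ.cos.smul_const x).add (hθ.sin.smul_const y)).congr_deriv (by module)

theorem HasDerivAt.rotate_snd {θ : ℝ → ℝ} {ω t : ℝ} (hθ : HasDerivAt θ ω t) (x y : F) :
    HasDerivAt (fun t => (-Real.sin (θ t)) • x + Real.cos (θ t) • y)
      (-(ω • (Real.cos (θ t) • x + Real.sin (θ t) • y))) t :=
  ((hθ.sin.neg.smul_const x).add (hθ.cos.smul_const y)).congr_deriv (by module)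

theorem exists_rotation_flow {ω : ℝ → ℝ} (hω : Continuous ω) (x y : F) :
    ∃ qb pb : ℝ → F,
      (∀ t, HasDerivAt qb (ω t • pb t) t) ∧ (∀ t, HasDerivAt pb (-(ω t • qb t)) t) ∧
      qb 0 = x ∧ pb 0 = y ∧ ∀ t, ‖qb t‖ ^ 2 + ‖pb t‖ ^ 2 = ‖x‖ ^ 2 + ‖y‖ ^ 2 := by
  set θ : ℝ → ℝ := fun t => ∫ s in (0 : ℝ)..t, ω s
  have hθ (t : ℝ) : HasDerivAt θ (ω t) t := (hω.integral_hasStrictDerivAt 0 t).hasDerivAt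
  refine ⟨fun t => cos (θ t) • x + sin (θ t) • y, fun t => (-sin (θ t)) • x + cos (θ t) • y,
    fun t => (hθ t).rotate_fst x y, fun t => (hθ t).rotate_snd x y, ?_, ?_,
    fun t => norm_sq_add_norm_sq_rotate (θ t) x y⟩ <;> simp [θ]

end Rotation

theorem flow_displaces_symplectic_submanifold_general
    {F : Type*} [NormedAddCommGroup F] [InnerProductSpace ℝ F]
    (χ : ℝ → ℝ → ℝ) (hχ : ContDiff ℝ 1 (fun z : ℝ × ℝ => χ z.1 z.2))
    (hχq : ∀ s : ℝ, deriv (fun u => χ u 0) s = 0)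
    (hχp : ∀ s : ℝ, deriv (fun v => χ s v) 0 = 1)
    (A : ℝ → ℝ)
    (q₀ p₀ : F) (r₀ : ℝ) (hr : r₀ ^ 2 = ‖q₀‖ ^ 2 + ‖p₀‖ ^ 2) :
    ∃ (q₁ p₁ : ℝ → ℝ) (qb pb : ℝ → F),
      (∀ t : ℝ, HasDerivAt q₁
        (deriv (fun v => χ (q₁ t) v) (p₁ t) * A (‖qb t‖ ^ 2 + ‖pb t‖ ^ 2)) t) ∧
      (∀ t : ℝ, HasDerivAt p₁
        (-(deriv (fun u => χ u (p₁ t)) (q₁ t) * A (‖qb t‖ ^ 2 + ‖pb t‖ ^ 2))) t) ∧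
      (∀ t : ℝ, HasDerivAt qb
        ((2 * χ (q₁ t) (p₁ t) * deriv A (‖qb t‖ ^ 2 + ‖pb t‖ ^ 2)) • pb t) t) ∧
      (∀ t : ℝ, HasDerivAt pb
        (-((2 * χ (q₁ t) (p₁ t) * deriv A (‖qb t‖ ^ 2 + ‖pb t‖ ^ 2)) • qb t)) t) ∧
      q₁ 0 = 0 ∧ p₁ 0 = 0 ∧ qb 0 = q₀ ∧ pb 0 = p₀ ∧
      (∀ t : ℝ, p₁ t = 0) ∧ (∀ t : ℝ, q₁ t = t * A (r₀ ^ 2)) ∧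
      (∀ t : ℝ, ‖qb t‖ ^ 2 + ‖pb t‖ ^ 2 = r₀ ^ 2) := by
  set a := A (r₀ ^ 2)
  have hω : Continuous fun t => 2 * χ (t * a) 0 * deriv A (r₀ ^ 2) := by
    have hχc : Continuous fun t => χ (t * a) 0 :=
      hχ.continuous.comp (by fun_prop : Continuous fun t : ℝ => (t * a, (0 : ℝ)))
    fun_prop
  obtain ⟨qb, pb, hqb, hpb, hqb₀, hpb₀, hnorm⟩ := exists_rotation_flow hω q₀ p₀
  rw [← hr] at hnorm
  refine ⟨fun t => t * a, fun _ => 0, qb, pb, fun t => ?_, fun t => ?_, fun t => ?_,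
    fun t => ?_, zero_mul a, rfl, hqb₀, hpb₀, fun _ => rfl, fun _ => rfl, hnorm⟩
  · simpa [hnorm t, hχp] using (hasDerivAt_id t).mul_const a
  · simpa [hnorm t, hχq] using hasDerivAt_const t (0 : ℝ)
  · simpa [hnorm t] using hqb t
  · simpa [hnorm t] using hpb t

/-- Explicit solution of the Hamiltonian system for `H(q₁,p₁,q̄,p̄) = χ(q₁,p₁)·A(‖q̄‖²+‖p̄‖²)`
starting on the codimension-2 symplectic submanifold `{q₁ = p₁ = 0}`: there is a trajectory
with `p₁(t) = 0`, `q₁(t) = t·A(r₀²)` and `‖q̄(t)‖² + ‖p̄(t)‖²` constant equal to `r₀²`. -/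
theorem flow_displaces_symplectic_submanifold
    {F : Type*} [NormedAddCommGroup F] [InnerProductSpace ℝ F]
    (χ : ℝ → ℝ → ℝ) (hχ : ContDiff ℝ 1 (fun z : ℝ × ℝ => χ z.1 z.2))
    (hχq : ∀ s : ℝ, deriv (fun u => χ u 0) s = 0)
    (hχp : ∀ s : ℝ, deriv (fun v => χ s v) 0 = 1)
    (A : ℝ → ℝ) (hA : ContDiff ℝ 1 A)
    (q₀ p₀ : F) (r₀ : ℝ) (hr : r₀ ^ 2 = ‖q₀‖ ^ 2 + ‖p₀‖ ^ 2) :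
    ∃ (q₁ p₁ : ℝ → ℝ) (qb pb : ℝ → F),
      (∀ t : ℝ, HasDerivAt q₁
        (deriv (fun v => χ (q₁ t) v) (p₁ t) * A (‖qb t‖ ^ 2 + ‖pb t‖ ^ 2)) t) ∧
      (∀ t : ℝ, HasDerivAt p₁
        (-(deriv (fun u => χ u (p₁ t)) (q₁ t) * A (‖qb t‖ ^ 2 + ‖pb t‖ ^ 2))) t) ∧
      (∀ t : ℝ, HasDerivAt qb
        ((2 * χ (q₁ t) (p₁ t) * deriv A (‖qb t‖ ^ 2 + ‖pb t‖ ^ 2)) • pb t) t) ∧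
      (∀ t : ℝ, HasDerivAt pb
        (-((2 * χ (q₁ t) (p₁ t) * deriv A (‖qb t‖ ^ 2 + ‖pb t‖ ^ 2)) • qb t)) t) ∧
      q₁ 0 = 0 ∧ p₁ 0 = 0 ∧ qb 0 = q₀ ∧ pb 0 = p₀ ∧
      (∀ t : ℝ, p₁ t = 0) ∧ (∀ t : ℝ, q₁ t = t * A (r₀ ^ 2)) ∧
      (∀ t : ℝ, ‖qb t‖ ^ 2 + ‖pb t‖ ^ 2 = r₀ ^ 2) :=
  flow_displaces_symplectic_submanifold_general χ hχ hχq hχp A q₀ p₀ r₀ hr
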